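/- arXiv:2303.00130 — 2 statements merged into one kernel-verified Lean document; each statement's English description precedes it below -/
import Mathlib

section
/- Let X be a topological space, Y a metric space, and f : X → Y continuous. Let 𝒰 = (U_i)_{i ∈ I} be a finite family of open subsets of Y covering f(X), with resolution res(𝒰) := sup_{i ∈ I} sup_{x, y ∈ U_i} d(x, y). For a subset V ⊆ Y write N(V) := ⋃_{σ ∈ K_V} U_σ, where U_σ := ⋂_{i ∈ σ} U_i and K_V := {σ : σ nonempty finite ⊆ I, U_σ ∩ V ≠ ∅}. Then for every real ε > res(𝒰), every δ ≥ 0, and every subset V ⊆ Y, the following sandwich inclusions hold on preimages: f⁻¹(V^δ) ⊆ f⁻¹(N(V^δ)) ⊆ f⁻¹(V^{δ+ε}), where V^t := {y ∈ Y : infDist(y, V) < t} for t > 0 and V^0 := V. -/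
/-- The open `t`-thickening `V^t := {y | infDist y V < t}` of a set for `t > 0`,
with the convention `V^0 := V`. -/
def thickenedSet {Y : Type*} [MetricSpace Y] (V : Set Y) (t : ℝ) : Set Y :=
  if t = 0 then V else {y : Y | Metric.infDist y V < t}

/-- The union `N(V) := ⋃ σ ∈ K_V, U_σ` of all intersections
`U_σ := ⋂ i ∈ σ, U i` (for `σ` nonempty finite) that meet `V`. -/
def nerveNbhd {Y : Type*} {I : Type*} (U : I → Set Y) (V : Set Y) : Set Y :=
  ⋃ σ ∈ {σ : Finset I | σ.Nonempty ∧ ((⋂ i ∈ σ, U i) ∩ V).Nonempty}, ⋂ i ∈ σ, U i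

/-!
The first inclusion holds because each point of `V^δ` in the cover lies in some `U_i`,
and the singleton `{i}` belongs to `K_{V^δ}`. For the second, a point of `U_σ` with
`U_σ ∩ V^δ ∋ z` shares a member `U_i` of the cover with `z`, so it lies within
`diam U_i ≤ res < ε` of `z`, hence within `δ + ε` of `V`.
-/

open Metric

section Thickening

variable {Y : Type*} [MetricSpace Y]

theorem thickenedSet_of_ne_zero (V : Set Y) {t : ℝ} (ht : t ≠ 0) :
    thickenedSet V t = {y | infDist y V < t} :=
  if_neg ht

theorem mem_thickenedSet_add_of_dist_lt {V : Set Y} {δ ε : ℝ} {y z : Y}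
    (hz : z ∈ thickenedSet V δ) (hδ : 0 ≤ δ) (hyz : dist y z < ε) :
    y ∈ thickenedSet V (δ + ε) := by
  have hε : 0 < ε := dist_nonneg.trans_lt hyz
  rw [thickenedSet_of_ne_zero V (by linarith : δ + ε ≠ 0)]
  rcases hδ.eq_or_lt with rfl | hδ
  · have hzV : z ∈ V := by simpa [thickenedSet] using hz
    rw [zero_add]
    exact (infDist_le_dist_of_mem hzV).trans_lt hyz
  · rw [thickenedSet_of_ne_zero V hδ.ne'] at hz
    exact infDist_le_infDist_add_dist.trans_lt (add_lt_add hz hyz)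

end Thickening

section Nerve

variable {Y I : Type*} {U : I → Set Y} {W : Set Y}

theorem inter_iUnion_subset_nerveNbhd : (⋃ i, U i) ∩ W ⊆ nerveNbhd U W := by
  rintro y ⟨hyU, hyW⟩
  obtain ⟨i, hi⟩ := Set.mem_iUnion.mp hyU
  refine Set.mem_iUnion₂.mpr ⟨{i}, ⟨Finset.singleton_nonempty i, y, ?_, hyW⟩, ?_⟩ <;>
    simpa using hi

theorem exists_mem_of_mem_nerveNbhd {y : Y} (hy : y ∈ nerveNbhd U W) :
    ∃ i, ∃ z ∈ W, y ∈ U i ∧ z ∈ U i := by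
  obtain ⟨σ, ⟨⟨i, hi⟩, z, hzσ, hzW⟩, hyσ⟩ := Set.mem_iUnion₂.mp hy
  exact ⟨i, z, hzW, Set.mem_iInter₂.mp hyσ i hi, Set.mem_iInter₂.mp hzσ i hi⟩

theorem nerveNbhd_thickenedSet_subset [MetricSpace Y] {V : Set Y} {r ε δ : ℝ}
    (hb : ∀ i, Bornology.IsBounded (U i)) (hdiam : ∀ i, diam (U i) ≤ r) (hr : r < ε)
    (hδ : 0 ≤ δ) : nerveNbhd U (thickenedSet V δ) ⊆ thickenedSet V (δ + ε) := by
  intro y hy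
  obtain ⟨i, z, hz, hyi, hzi⟩ := exists_mem_of_mem_nerveNbhd hy
  have hyz : dist y z < ε := ((dist_le_diam_of_mem (hb i) hyi hzi).trans (hdiam i)).trans_lt hr
  exact mem_thickenedSet_add_of_dist_lt hz hδ hyz

end Nerve

theorem stmt_5_general {X Y : Type*} [MetricSpace Y]
    (f : X → Y) {I : Type*} [Fintype I]
    (U : I → Set Y) (hb : ∀ i, Bornology.IsBounded (U i))
    (hcover : Set.range f ⊆ ⋃ i, U i)
    (res : ℝ) (hres : res = ⨆ i, Metric.diam (U i)) :
    ∀ ε : ℝ, res < ε → ∀ δ : ℝ, 0 ≤ δ → ∀ V : Set Y,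
      f ⁻¹' (thickenedSet V δ) ⊆ f ⁻¹' (nerveNbhd U (thickenedSet V δ)) ∧
        f ⁻¹' (nerveNbhd U (thickenedSet V δ)) ⊆ f ⁻¹' (thickenedSet V (δ + ε)) := by
  intro ε hε δ hδ V
  have hdiam : ∀ i, diam (U i) ≤ res :=
    hres ▸ le_ciSup (Set.finite_range fun i => diam (U i)).bddAbove
  exact ⟨fun x hx => inter_iUnion_subset_nerveNbhd ⟨hcover ⟨x, rfl⟩, hx⟩,
    Set.preimage_mono (nerveNbhd_thickenedSet_subset hb hdiam hε hδ)⟩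

/-- Let `f : X → Y` be continuous, and let `U i`, `i ∈ I`, be a
finite family of open subsets of `Y` covering `f(X)`, with resolution
`res := ⨆ i, diam (U i)` (assumed finite, i.e. each `U i` is bounded).  Then for
every real `ε > res`, every `δ ≥ 0` and every `V ⊆ Y`, the sandwich inclusions
`f⁻¹(V^δ) ⊆ f⁻¹(N(V^δ)) ⊆ f⁻¹(V^(δ+ε))` hold. -/
theorem stmt_5 {X Y : Type*} [TopologicalSpace X] [MetricSpace Y]
    (f : X → Y) (hf : Continuous f) {I : Type*} [Fintype I]
    (U : I → Set Y) (hU : ∀ i, IsOpen (U i)) (hb : ∀ i, Bornology.IsBounded (U i))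
    (hcover : Set.range f ⊆ ⋃ i, U i)
    (res : ℝ) (hres : res = ⨆ i, Metric.diam (U i)) :
    ∀ ε : ℝ, res < ε → ∀ δ : ℝ, 0 ≤ δ → ∀ V : Set Y,
      f ⁻¹' (thickenedSet V δ) ⊆ f ⁻¹' (nerveNbhd U (thickenedSet V δ)) ∧
        f ⁻¹' (nerveNbhd U (thickenedSet V δ)) ⊆ f ⁻¹' (thickenedSet V (δ + ε)) :=
  stmt_5_general f U hb hcover res hres
end

section
/- Let A ⊆ ℝ be a nonempty compact set. For every real δ > 0 there exists a finite family 𝒰 = (U_1, …, U_m) of nonempty open intervals in ℝ such that: (i) A ⊆ U_1 ∪ … ∪ U_m; (ii) the diameter of each U_i is at most δ (so res(𝒰) := sup_i sup_{x,y ∈ U_i} |x − y| ≤ δ); and (iii) the nerve of 𝒰 is one-dimensional, i.e. for any three pairwise distinct indices i, j, k one has U_i ∩ U_j ∩ U_k = ∅. In other words, compact subsets of ℝ admit finite 1D covers of arbitrarily small resolution. -/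
/-!
Cover `A ⊆ [c, d]` by the intervals `(c + (n - 1) h, c + (n + 1) h)` of length `2h = δ`,
`n = 0, …, ⌊(d - c) / h⌋`. A point `x ≥ c` lies in the interval of index `⌊(x - c) / h⌋`,
and intervals whose indices differ by at least two are disjoint; since among three distinct
natural numbers two differ by at least two, no point lies in three of the intervals.
-/

open Set

lemma inter_inter_eq_empty_of_disjoint_of_add_two_le {α : Type*} {V : ℕ → Set α}
    (hV : ∀ a b, a + 2 ≤ b → Disjoint (V a) (V b)) {i j k : ℕ}
    (hij : i ≠ j) (hik : i ≠ k) (hjk : j ≠ k) : V i ∩ V j ∩ V k = ∅ := by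
  refine eq_empty_of_forall_notMem fun x ⟨⟨hi, hj⟩, hk⟩ ↦ ?_
  have adjacent : ∀ a b, x ∈ V a → x ∈ V b → a ≤ b + 1 ∧ b ≤ a + 1 := by
    intro a b ha hb
    exact ⟨not_lt.1 fun hba ↦ disjoint_left.1 (hV b a hba) hb ha,
      not_lt.1 fun hab ↦ disjoint_left.1 (hV a b hab) ha hb⟩
  have := adjacent i j hi hj
  have := adjacent i k hi hk
  have := adjacent j k hj hk
  omega

def gridInterval (c h : ℝ) (n : ℕ) : Set ℝ :=
  Ioo (c + (n - 1) * h) (c + (n + 1) * h)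

lemma dist_le_of_mem_gridInterval {c h x y : ℝ} {n : ℕ} (hx : x ∈ gridInterval c h n)
    (hy : y ∈ gridInterval c h n) : dist x y ≤ 2 * h := by
  have := Real.dist_le_of_mem_Icc (Ioo_subset_Icc_self hx) (Ioo_subset_Icc_self hy)
  linarith

lemma disjoint_gridInterval {c h : ℝ} (hh : 0 ≤ h) {a b : ℕ} (hab : a + 2 ≤ b) :
    Disjoint (gridInterval c h a) (gridInterval c h b) := by
  have hab' : (a : ℝ) + 2 ≤ b := by exact_mod_cast hab
  refine (Ioc_disjoint_Ioc_of_le ?_).mono Ioo_subset_Ioc_self Ioo_subset_Ioc_self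
  gcongr
  linarith

lemma mem_gridInterval_floor {c h x : ℝ} (hh : 0 < h) (hcx : c ≤ x) :
    x ∈ gridInterval c h ⌊(x - c) / h⌋₊ := by
  have hlow : (⌊(x - c) / h⌋₊ : ℝ) * h ≤ x - c :=
    (le_div_iff₀ hh).1 (Nat.floor_le (div_nonneg (sub_nonneg.2 hcx) hh.le))
  have hup : x - c < (⌊(x - c) / h⌋₊ + 1) * h := (div_lt_iff₀ hh).1 (Nat.lt_floor_add_one _)
  constructor <;> linarith

theorem stmt_8_general (A : Set ℝ) (hAc : IsCompact A)
    (δ : ℝ) (hδ : 0 < δ) :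
    ∃ (m : ℕ) (U : Fin m → Set ℝ),
      (∀ i, ∃ a b : ℝ, a < b ∧ U i = Set.Ioo a b) ∧
      A ⊆ ⋃ i, U i ∧
      (∀ i, ∀ x ∈ U i, ∀ y ∈ U i, |x - y| ≤ δ) ∧
      ∀ i j k : Fin m, i ≠ j → i ≠ k → j ≠ k → U i ∩ U j ∩ U k = ∅ := by
  have hA := hAc.isBounded.subset_Icc_sInf_sSup
  set c := sInf A
  set h := δ / 2
  have hh : 0 < h := half_pos hδ
  refine ⟨⌊(sSup A - c) / h⌋₊ + 1, fun i ↦ gridInterval c h i, fun i ↦ ⟨_, _, ?_, rfl⟩,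
    fun x hx ↦ ?_, fun i x hx y hy ↦ ?_, fun i j k hij hik hjk ↦ ?_⟩
  · linarith
  · have hfloor : ⌊(x - c) / h⌋₊ < ⌊(sSup A - c) / h⌋₊ + 1 :=
      Nat.lt_succ_of_le (Nat.floor_le_floor (by gcongr; exact (hA hx).2))
    exact mem_iUnion.2 ⟨⟨_, hfloor⟩, mem_gridInterval_floor hh (hA hx).1⟩
  · rw [← Real.dist_eq]
    exact (dist_le_of_mem_gridInterval hx hy).trans_eq (mul_div_cancel₀ δ two_ne_zero)
  · exact inter_inter_eq_empty_of_disjoint_of_add_two_le (fun a b ↦ disjoint_gridInterval hh.le)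
      (Fin.val_ne_of_ne hij) (Fin.val_ne_of_ne hik) (Fin.val_ne_of_ne hjk)

/-- Every nonempty compact set `A ⊆ ℝ` admits, for every `δ > 0`,
a finite cover `U_1, …, U_m` by nonempty open intervals, each of diameter at
most `δ` (so that `res 𝒰 ≤ δ`), whose nerve is one-dimensional: all triple
intersections of pairwise distinct cover elements are empty.  In other words,
compact subsets of `ℝ` admit finite 1D covers of arbitrarily small resolution. -/
theorem stmt_8 (A : Set ℝ) (hA : A.Nonempty) (hAc : IsCompact A)
    (δ : ℝ) (hδ : 0 < δ) :
    ∃ (m : ℕ) (U : Fin m → Set ℝ),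
      (∀ i, ∃ a b : ℝ, a < b ∧ U i = Set.Ioo a b) ∧
      A ⊆ ⋃ i, U i ∧
      (∀ i, ∀ x ∈ U i, ∀ y ∈ U i, |x - y| ≤ δ) ∧
      ∀ i j k : Fin m, i ≠ j → i ≠ k → j ≠ k → U i ∩ U j ∩ U k = ∅ :=
  stmt_8_general A hAc δ hδ
end
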